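/- For any d, s ∈ ℕ and ε > 0 there exists r ∈ ℕ such that for any polynomial mapping φ ∈ Pol⁰_d([r], ℝ) there exists a disjoint s-subcollection B in [r] such that the t-producing function Φ̃_B of the subpolynomial φ↓_B satisfies ‖Φ̃_B(u)‖ < ε for every u ∈ B^{(≤d)}. -/

import Mathlib

open Finset

/-- The `β`-derivative of a map `φ : F(A) → H`: `D_β φ (α) = φ(α ∪ β) - φ(α)`. -/
def fsDeriv {ι H : Type*} [DecidableEq ι] [AddCommGroup H]
    (φ : Finset ι → H) (β : Finset ι) : Finset ι → H :=
  fun α => φ (α ∪ β) - φ α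

/-- Iterated derivative `D_{β 0} ⋯ D_{β (n-1)} φ`. -/
def iterDeriv {ι H : Type*} [DecidableEq ι] [AddCommGroup H] :
    {n : ℕ} → (Finset ι → H) → (Fin n → Finset ι) → (Finset ι → H)
  | 0, φ, _ => φ
  | _ + 1, φ, β => iterDeriv (fsDeriv φ (β 0)) (fun i => β i.succ)

/-- `φ : F(A) → H` is polynomial of degree ≤ d: any d+1 pairwise disjoint
derivatives (by finite subsets of `A`) kill `φ` on `F(A)` away from them. -/
def IsPolyDeg {ι H : Type*} [DecidableEq ι] [AddCommGroup H]
    (A : Finset ι) (d : ℕ) (φ : Finset ι → H) : Prop :=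
  ∀ β : Fin (d + 1) → Finset ι, (∀ i, β i ⊆ A) →
    (∀ i j, i ≠ j → Disjoint (β i) (β j)) →
    ∀ α : Finset ι, α ⊆ A → (∀ i, Disjoint α (β i)) → iterDeriv φ β α = 0

/-- `Pol⁰_d(A,H)`: polynomial maps of degree ≤ d vanishing at `∅`. -/
def Pol0 {ι H : Type*} [DecidableEq ι] [AddCommGroup H]
    (A : Finset ι) (d : ℕ) (φ : Finset ι → H) : Prop :=
  IsPolyDeg A d φ ∧ φ (∅ : Finset ι) = 0

/-- `‖x‖`: the distance from a real number `x` to `ℤ`. -/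
noncomputable def distToInt (x : ℝ) : ℝ := |x - round x|

/-!
Write `D_{b u}` for the composite of the derivatives `D_{b t}`, `t ∈ u`, along blocks `b t`. The
t-producing function of `φ↓_b` is `u ↦ (D_{b u} φ)(∅)`, which vanishes for `|u| > d`, and
`(D_{b (u ∪ {t})} φ)(∅) = (D_{b u} φ)(b t) - (D_{b u} φ)(∅)`. So choose the blocks one at a time:
the maps `γ ↦ (D_{b u} φ)(γ) - (D_{b u} φ)(∅)`, `u ⊆ {0, …, t-1}`, lie in `Pol⁰_d` of the unused
part of `[r]`, and it suffices that any `m` maps in `Pol⁰_d(A, ℝ)` with `|A|` large take values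
close to `ℤ` simultaneously at some nonempty `α ⊆ A`.

This is proved by induction on `d`, the case `d = 0` being trivial. For degree `d + 1`, the defects
`γ ↦ ψ(γ ∪ V) - ψ(γ) - ψ(V)` are in `Pol⁰_d`, so the induction hypothesis yields blocks
`β₀, …, β_{K-1}` with `ψ(β_t ∪ V) ≈ ψ(β_t) + ψ(V)` whenever `V` is a union of consecutive blocks
ending just before `β_t`. By pigeonhole on the fractional parts of the partial sums
`∑_{t<k} ψ(β_t)` there are `k < l` with every `∑_{k≤t<l} ψ(β_t)` close to `ℤ`, and
`α = β_k ∪ ⋯ ∪ β_{l-1}` works.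
-/

section MixedDiff

variable {ι κ κ' H : Type*} [DecidableEq ι] [AddCommGroup H]

/-- For `u = {t₁, …, tₙ}` this is `(D_{b t₁} ⋯ D_{b tₙ} φ)(α)` expanded by inclusion–exclusion. -/
def mixedDiff (φ : Finset ι → H) (b : κ → Finset ι) (u : Finset κ) (α : Finset ι) : H :=
  ∑ v ∈ u.powerset, (-1 : ℤ) ^ (u.card - v.card) • φ (α ∪ v.biUnion b)

@[simp]
theorem mixedDiff_empty (φ : Finset ι → H) (b : κ → Finset ι) (α : Finset ι) :
    mixedDiff φ b ∅ α = φ α := by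
  simp [mixedDiff]

theorem mixedDiff_add (φ ψ : Finset ι → H) (b : κ → Finset ι) (u : Finset κ) (α : Finset ι) :
    mixedDiff (φ + ψ) b u α = mixedDiff φ b u α + mixedDiff ψ b u α := by
  simp [mixedDiff, smul_add, sum_add_distrib]

theorem mixedDiff_neg (φ : Finset ι → H) (b : κ → Finset ι) (u : Finset κ) (α : Finset ι) :
    mixedDiff (-φ) b u α = -mixedDiff φ b u α := by
  simp [mixedDiff, smul_neg, sum_neg_distrib]

theorem mixedDiff_zero (b : κ → Finset ι) (u : Finset κ) (α : Finset ι) :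
    mixedDiff (0 : Finset ι → H) b u α = 0 := by
  simp [mixedDiff]

theorem mixedDiff_comp_union_right (φ : Finset ι → H) (W : Finset ι) (b : κ → Finset ι)
    (u : Finset κ) (α : Finset ι) :
    mixedDiff (fun γ => φ (γ ∪ W)) b u α = mixedDiff φ b u (α ∪ W) := by
  simp only [mixedDiff, union_right_comm α]

theorem mixedDiff_congr {φ : Finset ι → H} {b b' : κ → Finset ι} {u : Finset κ}
    (h : ∀ t ∈ u, b t = b' t) (α : Finset ι) : mixedDiff φ b u α = mixedDiff φ b' u α :=
  sum_congr rfl fun v hv => by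
    rw [biUnion_congr rfl fun t ht => h t (mem_powerset.1 hv ht)]

theorem mixedDiff_insert [DecidableEq κ] {j : κ} {u : Finset κ} (hj : j ∉ u)
    (φ : Finset ι → H) (b : κ → Finset ι) (α : Finset ι) :
    mixedDiff φ b (insert j u) α = mixedDiff φ b u (α ∪ b j) - mixedDiff φ b u α := by
  have hcard := card_insert_of_notMem hj
  have h₁ : ∀ v ∈ u.powerset, (-1 : ℤ) ^ ((insert j u).card - v.card) • φ (α ∪ v.biUnion b) =
      -((-1 : ℤ) ^ (u.card - v.card) • φ (α ∪ v.biUnion b)) := fun v hv => by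
    rw [hcard, Nat.sub_add_comm (card_le_card (mem_powerset.1 hv)), pow_succ, mul_neg_one,
      neg_smul]
  have h₂ : ∀ v ∈ u.powerset, (-1 : ℤ) ^ ((insert j u).card - (insert j v).card) •
      φ (α ∪ (insert j v).biUnion b) =
      (-1 : ℤ) ^ (u.card - v.card) • φ (α ∪ b j ∪ v.biUnion b) := fun v hv => by
    rw [hcard, card_insert_of_notMem fun h => hj (mem_powerset.1 hv h), Nat.add_sub_add_right,
      biUnion_insert, union_assoc]
  rw [mixedDiff, sum_powerset_insert hj, sum_congr rfl h₁, sum_congr rfl h₂, sum_neg_distrib,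
    mixedDiff, mixedDiff]
  abel

theorem mixedDiff_fsDeriv [DecidableEq κ] {j : κ} {u : Finset κ} (hj : j ∉ u)
    (φ : Finset ι → H) (b : κ → Finset ι) (α : Finset ι) :
    mixedDiff (fsDeriv φ (b j)) b u α = mixedDiff φ b (insert j u) α := by
  rw [mixedDiff_insert hj, mixedDiff, mixedDiff, mixedDiff, ← sum_sub_distrib]
  simp only [fsDeriv, smul_sub, union_right_comm α]

theorem mixedDiff_image [DecidableEq κ] [DecidableEq κ'] {f : κ' → κ} (hf : Function.Injective f)
    (φ : Finset ι → H) (b : κ → Finset ι) (u : Finset κ') (α : Finset ι) :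
    mixedDiff φ b (u.image f) α = mixedDiff φ (fun i => b (f i)) u α := by
  rw [mixedDiff, powerset_image, sum_image fun v _ w _ h => image_injective hf h]
  simp only [card_image_of_injective _ hf, image_biUnion]
  rfl

theorem sum_powerset_mixedDiff [DecidableEq κ] (φ : Finset ι → H) (b : κ → Finset ι)
    (γ : Finset κ) (α : Finset ι) :
    ∑ u ∈ γ.powerset, mixedDiff φ b u α = φ (α ∪ γ.biUnion b) := by
  induction γ using Finset.induction_on generalizing α with
  | empty => simp
  | insert j γ hj ih =>
    rw [sum_powerset_insert hj,
      sum_congr rfl fun u hu => mixedDiff_insert (fun h => hj (mem_powerset.1 hu h)) φ b α,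
      sum_sub_distrib, ih, ih, biUnion_insert, union_assoc]
    abel

theorem iterDeriv_eq_mixedDiff {n : ℕ} (φ : Finset ι → H) (β : Fin n → Finset ι) (α : Finset ι) :
    iterDeriv φ β α = mixedDiff φ β univ α := by
  induction n generalizing φ with
  | zero => simp [iterDeriv]
  | succ n ih =>
    rw [iterDeriv, ih, Fin.univ_succ, cons_eq_insert, ← mixedDiff_fsDeriv (by simp), map_eq_image]
    exact (mixedDiff_image (Fin.succ_injective n) _ _ _ _).symm

end MixedDiff

section IsPolyDeg

variable {ι κ H : Type*} [DecidableEq ι] [AddCommGroup H] {A : Finset ι} {d : ℕ}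

def polyDegSubgroup (A : Finset ι) (d : ℕ) : AddSubgroup (Finset ι → H) where
  carrier := {φ | IsPolyDeg A d φ}
  zero_mem' := fun β _ _ α _ _ => by rw [iterDeriv_eq_mixedDiff, mixedDiff_zero]
  add_mem' := fun hφ hψ β hβ hdisj α hα hαβ => by
    rw [iterDeriv_eq_mixedDiff, mixedDiff_add, ← iterDeriv_eq_mixedDiff, ← iterDeriv_eq_mixedDiff,
      hφ β hβ hdisj α hα hαβ, hψ β hβ hdisj α hα hαβ, add_zero]
  neg_mem' := fun hφ β hβ hdisj α hα hαβ => by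
    rw [iterDeriv_eq_mixedDiff, mixedDiff_neg, ← iterDeriv_eq_mixedDiff, hφ β hβ hdisj α hα hαβ,
      neg_zero]

theorem mem_polyDegSubgroup {φ : Finset ι → H} : φ ∈ polyDegSubgroup A d ↔ IsPolyDeg A d φ :=
  Iff.rfl

theorem IsPolyDeg.mono {A' : Finset ι} {φ : Finset ι → H} (h : IsPolyDeg A d φ) (hA : A' ⊆ A) :
    IsPolyDeg A' d φ :=
  fun β hβ hdisj α hα hαβ => h β (fun i => (hβ i).trans hA) hdisj α (hα.trans hA) hαβ

theorem isPolyDeg_const (A : Finset ι) (d : ℕ) (c : H) : IsPolyDeg A d fun _ => c := by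
  intro β _ _ α _ _
  have : fsDeriv (fun _ : Finset ι => c) (β 0) = 0 := funext fun _ => sub_self c
  rw [iterDeriv, this, iterDeriv_eq_mixedDiff, mixedDiff_zero]

theorem isPolyDeg_comp_union_right {φ : Finset ι → H} {W : Finset ι} (h : IsPolyDeg A d φ)
    (hW : W ⊆ A) : IsPolyDeg (A \ W) d fun γ => φ (γ ∪ W) := by
  intro β hβ hdisj α hα hαβ
  rw [iterDeriv_eq_mixedDiff, mixedDiff_comp_union_right, ← iterDeriv_eq_mixedDiff]
  exact h β (fun i => (hβ i).trans sdiff_subset) hdisj _ (union_subset (hα.trans sdiff_subset) hW)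
    fun i => disjoint_union_left.2 ⟨hαβ i, disjoint_sdiff.mono_right (hβ i)⟩

theorem isPolyDeg_fsDeriv {φ : Finset ι → H} {B : Finset ι} (h : IsPolyDeg A (d + 1) φ)
    (hB : B ⊆ A) : IsPolyDeg (A \ B) d (fsDeriv φ B) := by
  intro β hβ hdisj α hα hαβ
  have hBβ : ∀ i, Disjoint B (β i) := fun i => disjoint_sdiff.mono_right (hβ i)
  refine h (Fin.cons B β) (fun i => ?_) (fun i j hij => ?_) α (hα.trans sdiff_subset) fun i => ?_
  · cases i using Fin.cases with
    | zero => exact hB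
    | succ i => exact (hβ i).trans sdiff_subset
  · cases i using Fin.cases with
    | zero =>
      cases j using Fin.cases with
      | zero => exact absurd rfl hij
      | succ j => exact hBβ j
    | succ i =>
      cases j using Fin.cases with
      | zero => exact (hBβ i).symm
      | succ j => exact hdisj i j fun h => hij (congrArg Fin.succ h)
  · cases i using Fin.cases with
    | zero => exact sdiff_disjoint.mono_left hα
    | succ i => exact hαβ i

theorem IsPolyDeg.apply_eq_apply_empty {φ : Finset ι → H} (h : IsPolyDeg A 0 φ) {γ : Finset ι}
    (hγ : γ ⊆ A) : φ γ = φ ∅ := by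
  have := h (fun _ => γ) (fun _ => hγ)
    (fun i j hij => absurd (Subsingleton.elim (α := Fin 1) i j) hij) ∅ (empty_subset A)
    fun _ => disjoint_empty_left γ
  simpa [iterDeriv, fsDeriv, sub_eq_zero] using this

theorem IsPolyDeg.mixedDiff_eq_zero_of_card_eq {φ : Finset ι → H} (h : IsPolyDeg A d φ)
    {b : κ → Finset ι} {u : Finset κ} (hu : u.card = d + 1) (hb : ∀ t ∈ u, b t ⊆ A)
    (hdisj : (u : Set κ).PairwiseDisjoint b) {α : Finset ι} (hα : α ⊆ A)
    (hαb : ∀ t ∈ u, Disjoint α (b t)) : mixedDiff φ b u α = 0 := by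
  classical
  let e : Fin (d + 1) → κ := fun i => (u.equivFinOfCardEq hu).symm i
  have he : Function.Injective e := Subtype.val_injective.comp (Equiv.injective _)
  have hmem : ∀ i, e i ∈ u := fun i => ((u.equivFinOfCardEq hu).symm i).2
  have himage : univ.image e = u := eq_of_subset_of_card_le
    (image_subset_iff.2 fun i _ => hmem i) (by rw [card_image_of_injective _ he, card_fin, hu])
  rw [← himage, mixedDiff_image he, ← iterDeriv_eq_mixedDiff]
  exact h _ (fun i => hb _ (hmem i)) (fun i j hij => hdisj (hmem i) (hmem j) (he.ne hij)) α hα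
    fun i => hαb _ (hmem i)

theorem IsPolyDeg.mixedDiff_eq_zero {φ : Finset ι → H} (h : IsPolyDeg A d φ)
    {b : κ → Finset ι} {u : Finset κ} (hu : d < u.card) (hb : ∀ t ∈ u, b t ⊆ A)
    (hdisj : (u : Set κ).PairwiseDisjoint b) {α : Finset ι} (hα : α ⊆ A)
    (hαb : ∀ t ∈ u, Disjoint α (b t)) : mixedDiff φ b u α = 0 := by
  classical
  induction u using Finset.induction_on generalizing α with
  | empty => simp at hu
  | insert j u hj ih =>
    rcases Nat.lt_succ_iff_lt_or_eq.1 (card_insert_of_notMem hj ▸ hu) with hu' | hu'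
    · have hdisj' := hdisj.subset (coe_subset.2 (subset_insert j u))
      have hjt : ∀ t ∈ u, Disjoint (b j) (b t) := fun t ht =>
        hdisj (by simp) (by simp [ht]) fun h => hj (h ▸ ht)
      simp only [mem_insert, forall_eq_or_imp] at hb hαb
      rw [mixedDiff_insert hj, ih hu' hb.2 hdisj' (union_subset hα hb.1)
        (fun t ht => disjoint_union_left.2 ⟨hαb.2 t ht, hjt t ht⟩), ih hu' hb.2 hdisj' hα hαb.2,
        sub_zero]
    · exact h.mixedDiff_eq_zero_of_card_eq (by rw [card_insert_of_notMem hj, hu']) hb hdisj hα hαb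

theorem isPolyDeg_mixedDiff {φ : Finset ι → H} (h : IsPolyDeg A d φ) {b : κ → Finset ι}
    {u : Finset κ} (hb : ∀ t ∈ u, b t ⊆ A) :
    IsPolyDeg (A \ u.biUnion b) d fun γ => mixedDiff φ b u γ := by
  have hsum : (fun γ => mixedDiff φ b u γ) =
      ∑ v ∈ u.powerset, (-1 : ℤ) ^ (u.card - v.card) • fun γ => φ (γ ∪ v.biUnion b) := by
    ext γ
    simp [mixedDiff, Finset.sum_apply]
  rw [← mem_polyDegSubgroup, hsum]
  refine sum_mem fun v hv => zsmul_mem ?_ _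
  have hvu := mem_powerset.1 hv
  exact (isPolyDeg_comp_union_right h (biUnion_subset.2 fun t ht => hb t (hvu ht))).mono
    (sdiff_subset_sdiff subset_rfl (biUnion_subset_biUnion_of_subset_left b hvu))

theorem IsPolyDeg.pol0_sub_apply_empty {f : Finset ι → H} (h : IsPolyDeg A d f) :
    Pol0 A d fun γ => f γ - f ∅ :=
  ⟨sub_mem (mem_polyDegSubgroup.2 h) (mem_polyDegSubgroup.2 (isPolyDeg_const A d (f ∅))),
    sub_self _⟩

theorem Pol0.mono {A' : Finset ι} {φ : Finset ι → H} (h : Pol0 A d φ) (hA : A' ⊆ A) :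
    Pol0 A' d φ :=
  ⟨h.1.mono hA, h.2⟩

theorem Pol0.union_sub_sub {ψ : Finset ι → H} {V : Finset ι} (h : Pol0 A (d + 1) ψ) (hV : V ⊆ A) :
    Pol0 (A \ V) d fun γ => ψ (γ ∪ V) - ψ γ - ψ V := by
  simpa only [fsDeriv, empty_union, h.2, sub_zero] using
    (isPolyDeg_fsDeriv h.1 hV).pol0_sub_apply_empty

/-- Möbius inversion: `u ↦ mixedDiff φ b u ∅` is the t-producing function of `φ` along `b`. -/
theorem Pol0.apply_biUnion_eq_sum_mixedDiff [DecidableEq κ] {φ : Finset ι → H} (h : Pol0 A d φ)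
    {b : κ → Finset ι} {γ : Finset κ} (hb : ∀ t ∈ γ, b t ⊆ A)
    (hdisj : (γ : Set κ).PairwiseDisjoint b) :
    φ (γ.biUnion b) = ∑ u ∈ γ.powerset.filter (fun u => u ≠ ∅ ∧ u.card ≤ d), mixedDiff φ b u ∅ := by
  rw [sum_filter_of_ne, sum_powerset_mixedDiff, empty_union]
  intro u hu hne
  rw [mem_powerset] at hu
  refine ⟨fun hu0 => hne (by rw [hu0, mixedDiff_empty, h.2]), not_lt.1 fun hd => hne ?_⟩
  exact h.1.mixedDiff_eq_zero hd (fun t ht => hb t (hu ht)) (hdisj.subset (coe_subset.2 hu))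
    (empty_subset A) fun t _ => disjoint_empty_left (b t)

end IsPolyDeg

section DistToInt

theorem distToInt_zero : distToInt 0 = 0 := by
  simp [distToInt]

theorem distToInt_le_abs_sub_intCast (x : ℝ) (m : ℤ) : distToInt x ≤ |x - m| :=
  round_le x m

theorem distToInt_add_le (x y : ℝ) : distToInt (x + y) ≤ distToInt x + distToInt y :=
  calc distToInt (x + y) ≤ |x + y - ↑(round x + round y)| := distToInt_le_abs_sub_intCast _ _
    _ = |(x - round x) + (y - round y)| := by push_cast; ring_nf
    _ ≤ distToInt x + distToInt y := abs_add_le _ _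

theorem distToInt_sub_lt_of_floor_fract_mul_eq {x y : ℝ} {Q : ℕ} (hQ : 0 < Q)
    (h : ⌊Int.fract x * Q⌋₊ = ⌊Int.fract y * Q⌋₊) : distToInt (x - y) < 1 / Q := by
  have hQ' : (0 : ℝ) < Q := by exact_mod_cast hQ
  have hx := Nat.floor_le (mul_nonneg (Int.fract_nonneg x) hQ'.le)
  have hy := Nat.floor_le (mul_nonneg (Int.fract_nonneg y) hQ'.le)
  have hx' := Nat.lt_floor_add_one (Int.fract x * Q)
  have hy' := Nat.lt_floor_add_one (Int.fract y * Q)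
  have h' : (⌊Int.fract x * Q⌋₊ : ℝ) = ⌊Int.fract y * Q⌋₊ := by exact_mod_cast h
  calc distToInt (x - y) ≤ |x - y - ↑(⌊x⌋ - ⌊y⌋)| := distToInt_le_abs_sub_intCast _ _
    _ = |Int.fract x - Int.fract y| := by rw [Int.fract, Int.fract]; push_cast; ring_nf
    _ < 1 / Q := by
      rw [abs_sub_lt_iff, lt_div_iff₀ hQ', lt_div_iff₀ hQ', sub_mul, sub_mul]
      constructor <;> linarith

/-- Dirichlet's simultaneous approximation. -/
theorem exists_lt_le_forall_distToInt_sub_lt {I : Type*} [Fintype I] (S : ℕ → I → ℝ) {Q : ℕ}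
    (hQ : 0 < Q) :
    ∃ k l, k < l ∧ l ≤ Q ^ Fintype.card I ∧ ∀ i, distToInt (S l i - S k i) < 1 / Q := by
  classical
  have hQ' : (0 : ℝ) < Q := by exact_mod_cast hQ
  let c : Fin (Q ^ Fintype.card I + 1) → I → Fin Q := fun k i =>
    ⟨⌊Int.fract (S k i) * Q⌋₊, (Nat.floor_lt (mul_nonneg (Int.fract_nonneg _) hQ'.le)).2
      (mul_lt_of_lt_one_left hQ' (Int.fract_lt_one _))⟩
  obtain ⟨k, l, hkl, hc⟩ := Fintype.exists_ne_map_eq_of_card_lt c (by simp)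
  have hfloor : ∀ i, ⌊Int.fract (S k i) * Q⌋₊ = ⌊Int.fract (S l i) * Q⌋₊ := fun i =>
    congrArg Fin.val (congrFun hc i)
  rcases Fin.lt_or_lt_of_ne hkl with h | h
  · exact ⟨k, l, h, Nat.lt_succ_iff.1 l.2, fun i =>
      distToInt_sub_lt_of_floor_fract_mul_eq hQ (hfloor i).symm⟩
  · exact ⟨l, k, h, Nat.lt_succ_iff.1 k.2, fun i =>
      distToInt_sub_lt_of_floor_fract_mul_eq hQ (hfloor i)⟩

theorem distToInt_apply_biUnion_Ico_sub_sum_le {ι : Type*} [DecidableEq ι] {ψ : Finset ι → ℝ}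
    (hψ : ψ ∅ = 0) (β : ℕ → Finset ι) {k l : ℕ} (hkl : k ≤ l) {δ : ℝ}
    (h : ∀ t ∈ Ico k l, distToInt
      (ψ (β t ∪ (Ico k t).biUnion β) - ψ (β t) - ψ ((Ico k t).biUnion β)) ≤ δ) :
    distToInt (ψ ((Ico k l).biUnion β) - ∑ t ∈ Ico k l, ψ (β t)) ≤ (l - k) * δ := by
  induction l, hkl using Nat.le_induction with
  | base => simp [hψ, distToInt_zero]
  | succ l hkl ih =>
    rw [Nat.Ico_succ_right_eq_insert_Ico hkl, biUnion_insert, sum_insert (by simp)]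
    set V := (Ico k l).biUnion β
    calc distToInt (ψ (β l ∪ V) - (ψ (β l) + ∑ t ∈ Ico k l, ψ (β t)))
        = distToInt ((ψ (β l ∪ V) - ψ (β l) - ψ V) + (ψ V - ∑ t ∈ Ico k l, ψ (β t))) := by
          ring_nf
      _ ≤ δ + (l - k) * δ := (distToInt_add_le _ _).trans (add_le_add (h l (by simp [hkl]))
          (ih fun t ht => h t (Ico_subset_Ico_right l.le_succ ht)))
      _ = (↑(l + 1) - k) * δ := by push_cast; ring

end DistToInt

theorem disjoint_of_subset_sdiff_biUnion_range {ι : Type*} [DecidableEq ι] {A : Finset ι}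
    {β : ℕ → Finset ι} {K : ℕ} (h : ∀ t < K, β t ⊆ A \ (range t).biUnion β) :
    ∀ t < K, ∀ t' < K, t ≠ t' → Disjoint (β t) (β t') := by
  have hlt : ∀ t < K, ∀ t' < t, Disjoint (β t) (β t') := fun t ht t' ht' =>
    sdiff_disjoint.mono (h t ht) (subset_biUnion_of_mem β (mem_range.2 ht'))
  intro t ht t' ht' hne
  rcases hne.lt_or_gt with h | h
  · exact (hlt t' ht' t h).symm
  · exact hlt t ht t' h

theorem exists_greedy_blocks {ι : Type*} [DecidableEq ι] {A : Finset ι} {K N : ℕ}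
    (hA : K * N ≤ A.card) (P : (ℕ → Finset ι) → ℕ → Finset ι → Prop)
    (hP : ∀ β β' t γ, (∀ s < t, β s = β' s) → P β t γ → P β' t γ)
    (step : ∀ β t, t < K → (∀ s < t, β s ⊆ A) → ∀ A' ⊆ A \ (range t).biUnion β, A'.card = N →
      ∃ γ ⊆ A', γ.Nonempty ∧ P β t γ) :
    ∃ β : ℕ → Finset ι, (∀ t < K, (β t).Nonempty ∧ β t ⊆ A ∧ P β t (β t)) ∧
      ∀ t < K, ∀ t' < K, t ≠ t' → Disjoint (β t) (β t') := by
  suffices H : ∀ j ≤ K, ∃ β : ℕ → Finset ι, ∀ t < j,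
      (β t).Nonempty ∧ (β t).card ≤ N ∧ β t ⊆ A \ (range t).biUnion β ∧ P β t (β t) by
    obtain ⟨β, hβ⟩ := H K le_rfl
    exact ⟨β, fun t ht => ⟨(hβ t ht).1, (hβ t ht).2.2.1.trans sdiff_subset, (hβ t ht).2.2.2⟩,
      disjoint_of_subset_sdiff_biUnion_range fun t ht => (hβ t ht).2.2.1⟩
  intro j
  induction j with
  | zero => exact fun _ => ⟨fun _ => ∅, by simp⟩
  | succ j ih =>
    intro hj
    obtain ⟨β, hβ⟩ := ih (by omega)
    have hU : ((range j).biUnion β).card ≤ j * N := by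
      simpa using card_biUnion_le_card_mul (range j) β N fun t ht => (hβ t (mem_range.1 ht)).2.1
    have hroom : N ≤ (A \ (range j).biUnion β).card := by
      have := le_card_sdiff ((range j).biUnion β) A
      have := Nat.mul_le_mul_right N hj
      rw [add_mul, one_mul] at this
      omega
    obtain ⟨A', hA', hA'card⟩ := exists_subset_card_eq hroom
    obtain ⟨γ, hγ, hγne, hPγ⟩ :=
      step β j (by omega) (fun s hs => (hβ s hs).2.2.1.trans sdiff_subset) A' hA' hA'card
    have hagree : ∀ t ≤ j, ∀ s < t, β s = Function.update β j γ s := fun t ht s hs =>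
      (Function.update_of_ne (by omega) _ _).symm
    have hU' : ∀ t ≤ j, (range t).biUnion (Function.update β j γ) = (range t).biUnion β :=
      fun t ht => biUnion_congr rfl fun s hs => (hagree t ht s (mem_range.1 hs)).symm
    refine ⟨Function.update β j γ, fun t ht => ?_⟩
    rcases Nat.lt_succ_iff_lt_or_eq.1 ht with ht | rfl
    · rw [Function.update_of_ne ht.ne, hU' t ht.le]
      obtain ⟨hne, hcard, hsub, hPt⟩ := hβ t ht
      exact ⟨hne, hcard, hsub, hP β _ t _ (hagree t ht.le) hPt⟩
    · rw [Function.update_self, hU' _ le_rfl]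
      exact ⟨hγne, (card_le_card hγ).trans hA'card.le, hγ.trans hA',
        hP β _ _ γ (hagree _ le_rfl) hPγ⟩

section SmallValues

variable {ι : Type*} [DecidableEq ι] {d : ℕ}

def SmallValueBound (ι : Type*) [DecidableEq ι] (d m : ℕ) (ε : ℝ) (N : ℕ) : Prop :=
  ∀ A : Finset ι, A.card = N → ∀ Φ : Finset (Finset ι → ℝ), Φ.card ≤ m → (∀ ψ ∈ Φ, Pol0 A d ψ) →
    ∃ α ⊆ A, α.Nonempty ∧ ∀ ψ ∈ Φ, distToInt (ψ α) < ε

theorem smallValueBound_zero (m : ℕ) {ε : ℝ} (hε : 0 < ε) : SmallValueBound ι 0 m ε 1 := by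
  intro A hA Φ _ hΦ
  obtain ⟨a, rfl⟩ := card_eq_one.1 hA
  refine ⟨{a}, subset_rfl, singleton_nonempty a, fun ψ hψ => ?_⟩
  rw [(hΦ ψ hψ).1.apply_eq_apply_empty subset_rfl, (hΦ ψ hψ).2, distToInt_zero]
  exact hε

theorem SmallValueBound.exists_almostAdditive_blocks {K m N : ℕ} {δ : ℝ}
    (hN : SmallValueBound ι d (K * m) δ N) {A : Finset ι} (hA : A.card = K * N)
    {Φ : Finset (Finset ι → ℝ)} (hΦm : Φ.card ≤ m) (hΦ : ∀ ψ ∈ Φ, Pol0 A (d + 1) ψ) :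
    ∃ β : ℕ → Finset ι, ∀ t < K, (β t).Nonempty ∧ β t ⊆ A ∧ ∀ k ≤ t, ∀ ψ ∈ Φ,
      distToInt (ψ (β t ∪ (Ico k t).biUnion β) - ψ (β t) - ψ ((Ico k t).biUnion β)) < δ := by
  classical
  refine (exists_greedy_blocks hA.ge (fun β t γ => ∀ k ≤ t, ∀ ψ ∈ Φ,
      distToInt (ψ (γ ∪ (Ico k t).biUnion β) - ψ γ - ψ ((Ico k t).biUnion β)) < δ)
    (fun β β' t γ hββ' h k hk ψ hψ => ?_) (fun β t ht hβA A' hA' hA'card => ?_)).imp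
    fun β hβ => hβ.1
  · rw [← biUnion_congr rfl fun s hs => hββ' s (mem_Ico.1 hs).2]
    exact h k hk ψ hψ
  · have hV : ∀ k, (Ico k t).biUnion β ⊆ (range t).biUnion β := fun k =>
      biUnion_subset_biUnion_of_subset_left β fun s hs => mem_range.2 (mem_Ico.1 hs).2
    have hUA : (range t).biUnion β ⊆ A := biUnion_subset.2 fun s hs => hβA s (mem_range.1 hs)
    let Φ' := (range (t + 1) ×ˢ Φ).image fun p : ℕ × (Finset ι → ℝ) => fun γ =>
      p.2 (γ ∪ (Ico p.1 t).biUnion β) - p.2 γ - p.2 ((Ico p.1 t).biUnion β)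
    have hcard : Φ'.card ≤ K * m := card_image_le.trans <| by
      rw [card_product, card_range]
      exact Nat.mul_le_mul ht hΦm
    have hpol : ∀ f ∈ Φ', Pol0 A' d f := by
      simp only [Φ', mem_image, mem_product, Prod.exists]
      rintro _ ⟨k, ψ, ⟨-, hψ⟩, rfl⟩
      exact ((hΦ ψ hψ).union_sub_sub ((hV k).trans hUA)).mono
        (hA'.trans (sdiff_subset_sdiff subset_rfl (hV k)))
    obtain ⟨γ, hγ, hγne, hsmall⟩ := hN A' hA'card Φ' hcard hpol
    exact ⟨γ, hγ, hγne, fun k hk ψ hψ =>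
      hsmall _ (mem_image.2 ⟨(k, ψ), mem_product.2 ⟨mem_range.2 (Nat.lt_succ_of_le hk), hψ⟩, rfl⟩)⟩

theorem SmallValueBound.succ {m N Q : ℕ} {ε : ℝ} (hQ : 0 < Q) (hQε : 1 / (Q : ℝ) < ε / 2)
    (hN : SmallValueBound ι d (Q ^ m * m) (ε / (2 * Q ^ m)) N) :
    SmallValueBound ι (d + 1) m ε (Q ^ m * N) := by
  intro A hA Φ hΦm hΦ
  obtain ⟨β, hβ⟩ := hN.exists_almostAdditive_blocks hA hΦm hΦ
  obtain ⟨k, l, hkl, hl, hS⟩ := exists_lt_le_forall_distToInt_sub_lt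
    (fun n (ψ : Φ) => ∑ t ∈ range n, (ψ : Finset ι → ℝ) (β t)) hQ
  have hlK : l ≤ Q ^ m := hl.trans (Nat.pow_le_pow_right hQ (by simpa using hΦm))
  refine ⟨(Ico k l).biUnion β, biUnion_subset.2 fun t ht => (hβ t ?_).2.1,
    ((hβ k (by omega)).1.mono (subset_biUnion_of_mem β (by simp [hkl]))), fun ψ hψ => ?_⟩
  · simp only [mem_Ico] at ht
    omega
  have hε : 0 < ε := by linarith [one_div_pos.2 (Nat.cast_pos.2 hQ : (0 : ℝ) < Q)]
  have hacc := distToInt_apply_biUnion_Ico_sub_sum_le (hΦ ψ hψ).2 β hkl.le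
    fun t ht => ((hβ t (by simp only [mem_Ico] at ht; omega)).2.2 k (mem_Ico.1 ht).1 ψ hψ).le
  have hlk : ((l : ℝ) - k) * (ε / (2 * Q ^ m)) ≤ ε / 2 := by
    have : (l : ℝ) - k ≤ Q ^ m := by
      have : (l : ℝ) ≤ Q ^ m := by exact_mod_cast hlK
      linarith [(k.cast_nonneg : (0 : ℝ) ≤ k)]
    calc ((l : ℝ) - k) * (ε / (2 * Q ^ m)) ≤ Q ^ m * (ε / (2 * Q ^ m)) := by gcongr
      _ = ε / 2 := by field_simp
  calc distToInt (ψ ((Ico k l).biUnion β))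
      = distToInt ((ψ ((Ico k l).biUnion β) - ∑ t ∈ Ico k l, ψ (β t)) +
          (∑ t ∈ range l, ψ (β t) - ∑ t ∈ range k, ψ (β t))) := by
        rw [sum_Ico_eq_sub _ hkl.le]; ring_nf
    _ ≤ ε / 2 + distToInt (∑ t ∈ range l, ψ (β t) - ∑ t ∈ range k, ψ (β t)) :=
        (distToInt_add_le _ _).trans (add_le_add_left (hacc.trans hlk) _)
    _ < ε / 2 + ε / 2 := (add_lt_add_iff_left _).2 ((hS ⟨ψ, hψ⟩).trans hQε)
    _ = ε := add_halves ε

theorem exists_smallValueBound (ι : Type*) [DecidableEq ι] (d m : ℕ) {ε : ℝ} (hε : 0 < ε) :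
    ∃ N, SmallValueBound ι d m ε N := by
  induction d generalizing m ε with
  | zero => exact ⟨1, smallValueBound_zero m hε⟩
  | succ d ih =>
    obtain ⟨n, hn⟩ := exists_nat_one_div_lt (half_pos hε)
    obtain ⟨N, hN⟩ := ih ((n + 1) ^ m * m) (ε := ε / (2 * ((n + 1 : ℕ) : ℝ) ^ m)) (by positivity)
    exact ⟨_, hN.succ n.succ_pos (by exact_mod_cast hn)⟩

theorem distToInt_mixedDiff_lt_of_forall_lt {φ : Finset ι → ℝ} {b : ℕ → Finset ι} {s : ℕ}
    {ε : ℝ} (h : ∀ t < s, ∀ u ⊆ range t,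
      distToInt (mixedDiff φ b u (b t) - mixedDiff φ b u ∅) < ε)
    {u : Finset ℕ} (hu : u ⊆ range s) (hne : u.Nonempty) : distToInt (mixedDiff φ b u ∅) < ε := by
  have ht := max'_mem u hne
  have hlower : u.erase (u.max' hne) ⊆ range (u.max' hne) := fun x hx =>
    mem_range.2 ((le_max' u x (mem_of_mem_erase hx)).lt_of_ne (ne_of_mem_erase hx))
  rw [← insert_erase ht, mixedDiff_insert (notMem_erase _ u), empty_union]
  exact h _ (mem_range.1 (hu ht)) _ hlower

theorem SmallValueBound.exists_blocks_distToInt_mixedDiff_lt {s N : ℕ} {ε : ℝ}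
    (hN : SmallValueBound ι d (2 ^ s) ε N) {A : Finset ι} (hA : A.card = s * N)
    {φ : Finset ι → ℝ} (hφ : IsPolyDeg A d φ) :
    ∃ b : ℕ → Finset ι, (∀ t < s, (b t).Nonempty ∧ b t ⊆ A) ∧
      (∀ t < s, ∀ t' < s, t ≠ t' → Disjoint (b t) (b t')) ∧
      ∀ u ⊆ range s, u.Nonempty → distToInt (mixedDiff φ b u ∅) < ε := by
  classical
  obtain ⟨b, hb, hdisj⟩ := exists_greedy_blocks hA.ge
    (fun b t γ => ∀ u ⊆ range t, distToInt (mixedDiff φ b u γ - mixedDiff φ b u ∅) < ε)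
    (fun b b' t γ hbb' h u hu => by
      have hbb'u : ∀ x ∈ u, b x = b' x := fun x hx => hbb' x (mem_range.1 (hu hx))
      rw [← mixedDiff_congr hbb'u, ← mixedDiff_congr hbb'u]
      exact h u hu)
    (fun b t ht hbA A' hA' hA'card => by
      let Φ := (range t).powerset.image fun u γ => mixedDiff φ b u γ - mixedDiff φ b u ∅
      have hcard : Φ.card ≤ 2 ^ s := card_image_le.trans <| by
        rw [card_powerset, card_range]
        exact Nat.pow_le_pow_right two_pos ht.le
      have hpol : ∀ f ∈ Φ, Pol0 A' d f := by
        simp only [Φ, mem_image, mem_powerset]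
        rintro _ ⟨u, hu, rfl⟩
        exact (isPolyDeg_mixedDiff hφ fun x hx => hbA x (mem_range.1 (hu hx)))
          |>.pol0_sub_apply_empty.mono
            (hA'.trans (sdiff_subset_sdiff subset_rfl (biUnion_subset_biUnion_of_subset_left b hu)))
      obtain ⟨γ, hγ, hγne, hsmall⟩ := hN A' hA'card Φ hcard hpol
      exact ⟨γ, hγ, hγne, fun u hu => hsmall _ (mem_image_of_mem _ (mem_powerset.2 hu))⟩)
  exact ⟨b, fun t ht => ⟨(hb t ht).1, (hb t ht).2.1⟩, hdisj, fun u hu hne =>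
    distToInt_mixedDiff_lt_of_forall_lt (fun t ht => (hb t ht).2.2) hu hne⟩

end SmallValues

/-- Corollary: for any d, s ∈ ℕ and ε > 0 there is r such that every
`φ ∈ Pol⁰_d([r], ℝ)` has a disjoint s-subcollection `B` in `[r]` such that the
t-producing function `Φ̃_B` of `φ↓_B` satisfies `‖Φ̃_B(u)‖ < ε` for all
`u ∈ B^{(≤d)}`. -/
theorem pol0_real_subpolynomial_small_tproducing (d s : ℕ) (ε : ℝ) (hε : 0 < ε) :
    ∃ r : ℕ, ∀ φ : Finset ℕ → ℝ,
      Pol0 (Finset.Icc 1 r) d φ →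
      ∃ b : Fin s → Finset ℕ,
        (∀ j, (b j).Nonempty ∧ b j ⊆ Finset.Icc 1 r) ∧
        (∀ j j', j ≠ j' → Disjoint (b j) (b j')) ∧
        ∃ Φtil : Finset (Fin s) → ℝ,
          (∀ γ : Finset (Fin s),
            φ (γ.biUnion b) =
              ∑ u ∈ γ.powerset.filter (fun u => u ≠ ∅ ∧ u.card ≤ d), Φtil u) ∧
          (∀ u : Finset (Fin s), u ≠ ∅ → u.card ≤ d → distToInt (Φtil u) < ε) := by
  obtain ⟨N, hN⟩ := exists_smallValueBound ℕ d (2 ^ s) hε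
  refine ⟨s * N, fun φ hφ => ?_⟩
  obtain ⟨b, hb, hdisj, hsmall⟩ := hN.exists_blocks_distToInt_mixedDiff_lt (by simp) hφ.1
  have hdisj' : ∀ j j' : Fin s, j ≠ j' → Disjoint (b j) (b j') := fun j j' h =>
    hdisj j j.2 j' j'.2 (Fin.val_injective.ne h)
  refine ⟨fun j => b j, fun j => hb j j.2, hdisj', fun u => mixedDiff φ (fun j : Fin s => b j) u ∅,
    fun γ => hφ.apply_biUnion_eq_sum_mixedDiff (fun j _ => (hb j j.2).2)
      (Pairwise.set_pairwise hdisj' _),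
    fun u hu _ => ?_⟩
  have := hsmall _ (image_subset_iff.2 fun j _ => mem_range.2 j.2)
    ((nonempty_iff_ne_empty.2 hu).image _)
  rwa [mixedDiff_image Fin.val_injective] at this
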